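/- arXiv:1810.07082 — 7 statements merged into one kernel-verified Lean document; each statement's English description precedes it below -/
import Mathlib

section
/- Let 𝓗 be a complex Hilbert space, let T : 𝓗 → 𝓗 be a bounded self-adjoint operator, let c ∈ ℂ and r > 0 be such that the circle {z ∈ ℂ : |z − c| = r} is disjoint from the spectrum σ(T), and suppose that σ(T) ∩ {z : |z − c| < r} = {E_1, …, E_K} is a finite set, each element of which is an eigenvalue of T. Then the operator Γ := (2πi)⁻¹ ∮_{|z−c|=r} (z·I − T)⁻¹ dz (contour integral over the positively oriented circle of radius r centered at c) satisfies Γ∘Γ = Γ and Γ* = Γ, and Γ equals the orthogonal projection of 𝓗 onto the closed subspace spanned by the eigenspaces ker(T − E_1·I), …, ker(T − E_K·I). -/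
open Metric MeasureTheory

local notation "⟪" x ", " y "⟫" => @inner ℂ _ _ x y

private lemma aux_indicator_continuous {X : Type*} [TopologicalSpace X] {U : Set X}
    (h : IsClopen U) [DecidablePred (· ∈ U)] :
    Continuous (fun x => if x ∈ U then (1 : ℂ) else 0) := by
  rw [continuous_iff_continuousAt]
  intro x
  by_cases hx : x ∈ U
  · refine Filter.EventuallyEq.continuousAt (y := 1) ?_
    filter_upwards [h.isOpen.mem_nhds hx] with y hy
    simp [hy]
  · refine Filter.EventuallyEq.continuousAt (y := 0) ?_
    filter_upwards [h.compl.isOpen.mem_nhds hx] with y hy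
    simp only [Set.mem_compl_iff] at hy
    simp [hy]

/-- Riesz projection: for a bounded self-adjoint operator `T` on a complex Hilbert space and a
circle `|z - c| = r` disjoint from the spectrum enclosing finitely many eigenvalues
`E 0, …, E (K-1)` of `T` (and no other spectrum), the contour integral
`Γ = (2πi)⁻¹ ∮ (z - T)⁻¹ dz` is idempotent, self-adjoint, and equals the orthogonal projection
onto the closed span of the corresponding eigenspaces. -/
theorem stmt_0 {𝓗 : Type*} [NormedAddCommGroup 𝓗] [InnerProductSpace ℂ 𝓗] [CompleteSpace 𝓗]
    (T : 𝓗 →L[ℂ] 𝓗) (hT : IsSelfAdjoint T)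
    (c : ℂ) (r : ℝ) (hr : 0 < r)
    (hdisj : Disjoint (Metric.sphere c r) (spectrum ℂ T))
    (K : ℕ) (E : Fin K → ℂ)
    (hspec : spectrum ℂ T ∩ Metric.ball c r = Set.range E)
    (heig : ∀ i, Module.End.HasEigenvalue (T : 𝓗 →ₗ[ℂ] 𝓗) (E i))
    (Γ : 𝓗 →L[ℂ] 𝓗)
    (hΓ : Γ = (2 * (Real.pi : ℂ) * Complex.I)⁻¹ •
      ∮ z in C(c, r), Ring.inverse (z • (1 : 𝓗 →L[ℂ] 𝓗) - T)) :
    Γ ∘L Γ = Γ ∧ ContinuousLinearMap.adjoint Γ = Γ ∧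
      ∀ x : 𝓗,
        Γ x ∈ (⨆ i, Module.End.eigenspace (T : 𝓗 →ₗ[ℂ] 𝓗) (E i)).topologicalClosure ∧
        x - Γ x ∈ ((⨆ i, Module.End.eigenspace (T : 𝓗 →ₗ[ℂ] 𝓗) (E i)).topologicalClosure)ᗮ := by
  classical
  have hN : IsStarNormal T := hT.isStarNormal
  haveI : CompactSpace (spectrum ℂ T) := isCompact_iff_compactSpace.mp (spectrum.isCompact T)
  -- basic facts about the spectrum vs the circle
  have hSsph : ∀ x : ℂ, x ∈ spectrum ℂ T → x ∉ sphere c r := fun x hx hsx =>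
    Set.disjoint_left.mp hdisj hsx hx
  have hErange : ∀ i, E i ∈ spectrum ℂ T ∩ ball c r := by
    intro i; rw [hspec]; exact Set.mem_range_self i
  have hranges : Set.range E ⊆ spectrum ℂ T ∩ ball c r := by rw [hspec]
  have hπ : (2 * (Real.pi : ℂ) * Complex.I) ≠ 0 := by
    simp [Real.pi_ne_zero, Complex.I_ne_zero]
  -- the functional calculus
  set S := spectrum ℂ T with hSdef
  let φ : C(S, ℂ) →⋆ₐ[ℂ] (𝓗 →L[ℂ] 𝓗) := cfcHom hN
  let L : C(S, ℂ) →L[ℂ] (𝓗 →L[ℂ] 𝓗) :=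
    { toLinearMap := φ.toLinearMap, cont := cfcHom_continuous hN }
  -- the indicator of the ball, as a continuous function on the spectrum
  have hUclopen : IsClopen {x : S | (x : ℂ) ∈ ball c r} := by
    constructor
    · have h1 : {x : S | (x : ℂ) ∈ ball c r} = Subtype.val ⁻¹' closedBall c r := by
        ext x
        simp only [Set.mem_setOf_eq, Set.mem_preimage]
        constructor
        · exact fun h => ball_subset_closedBall h
        · intro h
          rcases (mem_closedBall.mp h).lt_or_eq with h' | h'
          · exact mem_ball.mpr h'
          · exact absurd (mem_sphere.mpr h') (hSsph _ x.2)
      rw [h1]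
      exact Metric.isClosed_closedBall.preimage continuous_subtype_val
    · exact isOpen_ball.preimage continuous_subtype_val
  let χ : C(S, ℂ) :=
    ⟨fun x => if x ∈ {x : S | (x : ℂ) ∈ ball c r} then (1 : ℂ) else 0,
      aux_indicator_continuous hUclopen⟩
  have hχ_apply : ∀ x : S, χ x = if (x : ℂ) ∈ ball c r then (1 : ℂ) else 0 := fun x => rfl
  -- the resolvent family along the circle
  have hne : ∀ p : ℝ × S, circleMap c r p.1 - (p.2 : ℂ) ≠ 0 := by
    intro p
    refine sub_ne_zero.mpr fun h => ?_
    exact hSsph _ p.2.2 (h ▸ circleMap_mem_sphere c hr.le p.1)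
  let F : C(ℝ × S, ℂ) :=
    ⟨fun p => (circleMap c r p.1 - (p.2 : ℂ))⁻¹,
      (((continuous_circleMap c r).comp continuous_fst).sub
        (continuous_subtype_val.comp continuous_snd)).inv₀ hne⟩
  have hres : ∀ θ : ℝ,
      Ring.inverse ((circleMap c r θ) • (1 : 𝓗 →L[ℂ] 𝓗) - T) = φ (F.curry θ) := by
    intro θ
    have hzS : circleMap c r θ ∉ S := fun h => hSsph _ h (circleMap_mem_sphere c hr.le θ)
    have hnex : ∀ x : S, circleMap c r θ - (x : ℂ) ≠ 0 := fun x => hne (θ, x)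
    set u : C(S, ℂ) := algebraMap ℂ C(S, ℂ) (circleMap c r θ) -
      (ContinuousMap.id ℂ).restrict S with hu
    have huv : u * F.curry θ = 1 := by
      ext x
      simp only [hu, ContinuousMap.mul_apply, ContinuousMap.sub_apply,
        _root_.algebraMap_apply, smul_eq_mul, mul_one, ContinuousMap.restrict_apply, ContinuousMap.id_apply,
        ContinuousMap.curry_apply, ContinuousMap.one_apply]
      exact mul_inv_cancel₀ (hnex x)
    have hvu : F.curry θ * u = 1 := by
      ext x
      simp only [hu, ContinuousMap.mul_apply, ContinuousMap.sub_apply,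
        _root_.algebraMap_apply, smul_eq_mul, mul_one, ContinuousMap.restrict_apply, ContinuousMap.id_apply,
        ContinuousMap.curry_apply, ContinuousMap.one_apply]
      exact inv_mul_cancel₀ (hnex x)
    have hφu : φ u = (circleMap c r θ) • (1 : 𝓗 →L[ℂ] 𝓗) - T := by
      rw [hu, map_sub, AlgHomClass.commutes, cfcHom_id hN, Algebra.algebraMap_eq_smul_one]
    rw [← hφu]
    exact Ring.inverse_unit
      ⟨φ u, φ (F.curry θ), by rw [← map_mul, huv, map_one], by rw [← map_mul, hvu, map_one]⟩
  -- integrability of the resolvent family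
  have hIcont : Continuous fun θ : ℝ => deriv (circleMap c r) θ • F.curry θ := by
    simp only [deriv_circleMap]
    exact ((continuous_circleMap 0 r).mul continuous_const).smul (map_continuous F.curry)
  have hInt : IntervalIntegrable (fun θ : ℝ => deriv (circleMap c r) θ • F.curry θ)
      volume 0 (2 * Real.pi) := hIcont.intervalIntegrable _ _
  -- the contour integral computed via the functional calculus
  set J : C(S, ℂ) := ∫ θ in (0:ℝ)..(2 * Real.pi), deriv (circleMap c r) θ • F.curry θ with hJ
  have hstep : (∮ z in C(c, r), Ring.inverse (z • (1 : 𝓗 →L[ℂ] 𝓗) - T)) = L J := by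
    rw [hJ, ← L.intervalIntegral_comp_comm hInt]
    simp only [circleIntegral]
    refine intervalIntegral.integral_congr fun θ _ => ?_
    rw [hres θ]
    exact (L.map_smul _ _).symm
  have hJval : J = (2 * (Real.pi : ℂ) * Complex.I) • χ := by
    ext x
    have hJx : J x = ∮ z in C(c, r), (z - (x : ℂ))⁻¹ := by
      have h1 : J x = (ContinuousMap.evalCLM ℂ x) J := rfl
      rw [h1, hJ, ← (ContinuousMap.evalCLM ℂ x).intervalIntegral_comp_comm hInt]
      simp only [circleIntegral]
      exact intervalIntegral.integral_congr fun θ _ => rfl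
    rw [hJx]
    rw [ContinuousMap.smul_apply, hχ_apply]
    by_cases hb : (x : ℂ) ∈ ball c r
    · rw [circleIntegral.integral_sub_inv_of_mem_ball hb]
      simp [hb]
    · have hxcb : (x : ℂ) ∉ closedBall c r := by
        intro h
        rcases (mem_closedBall.mp h).lt_or_eq with h' | h'
        · exact hb (mem_ball.mpr h')
        · exact hSsph _ x.2 (mem_sphere.mpr h')
      have h0 : (∮ z in C(c, r), (z - (x : ℂ))⁻¹) = 0 := by
        refine Complex.circleIntegral_eq_zero_of_differentiable_on_off_countable hr.le
          Set.countable_empty ?_ ?_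
        · refine ContinuousOn.inv₀ ((continuousOn_id.sub continuousOn_const)) ?_
          intro z hz
          exact sub_ne_zero.mpr fun h => hxcb (h ▸ hz)
        · intro z hz
          refine (differentiableAt_id.sub (differentiableAt_const _)).inv ?_
          exact sub_ne_zero.mpr fun h => hxcb (h ▸ ball_subset_closedBall hz.1)
      rw [h0]
      simp [hb]
  have hΓφ : Γ = φ χ := by
    rw [hΓ, hstep, hJval, L.map_smul, smul_smul, inv_mul_cancel₀ hπ, one_smul]
    rfl
  -- idempotence
  have hidem : Γ ∘L Γ = Γ := by
    have hχ2 : χ * χ = χ := by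
      ext x
      simp only [ContinuousMap.mul_apply, hχ_apply]
      by_cases h : (x : ℂ) ∈ ball c r <;> simp [h]
    calc Γ ∘L Γ = φ χ * φ χ := by rw [hΓφ]; rfl
    _ = φ (χ * χ) := (map_mul φ χ χ).symm
    _ = Γ := by rw [hχ2, hΓφ]
  -- self-adjointness
  have hsa : ContinuousLinearMap.adjoint Γ = Γ := by
    rw [← ContinuousLinearMap.star_eq_adjoint, hΓφ, ← map_star]
    congr 1
    ext x
    simp only [ContinuousMap.star_apply, hχ_apply]
    by_cases h : (x : ℂ) ∈ ball c r <;> simp [h]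
  -- fixed points: eigenvectors with eigenvalue inside the ball
  have hfix : ∀ (μ : ℂ), μ ∈ ball c r → ∀ v : 𝓗, T v = μ • v → Γ v = v := by
    intro μ hμ v hv
    have hzne : ∀ θ : ℝ, circleMap c r θ - μ ≠ 0 := by
      intro θ
      refine sub_ne_zero.mpr fun h => ?_
      have h2 : dist (circleMap c r θ) c = r := circleMap_mem_sphere c hr.le θ
      rw [h] at h2
      exact (mem_ball.mp hμ).ne h2
    have happ : ∀ θ : ℝ,
        Ring.inverse ((circleMap c r θ) • (1 : 𝓗 →L[ℂ] 𝓗) - T) v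
          = (circleMap c r θ - μ)⁻¹ • v := by
      intro θ
      have hzS : circleMap c r θ ∉ S := fun h => hSsph _ h (circleMap_mem_sphere c hr.le θ)
      have hu : IsUnit ((circleMap c r θ) • (1 : 𝓗 →L[ℂ] 𝓗) - T) := by
        have h1 := spectrum.notMem_iff.mp hzS
        rwa [Algebra.algebraMap_eq_smul_one] at h1
      have hw : ((circleMap c r θ) • (1 : 𝓗 →L[ℂ] 𝓗) - T) ((circleMap c r θ - μ)⁻¹ • v) = v := by
        have h7 : (circleMap c r θ - μ)⁻¹ * (circleMap c r θ - μ) = 1 :=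
          inv_mul_cancel₀ (hzne θ)
        simp only [ContinuousLinearMap.sub_apply, ContinuousLinearMap.smul_apply,
          ContinuousLinearMap.one_apply, ContinuousLinearMap.map_smul, hv, smul_smul]
        rw [← sub_smul, mul_comm (circleMap c r θ), ← mul_sub, h7, one_smul]
      calc Ring.inverse ((circleMap c r θ) • (1 : 𝓗 →L[ℂ] 𝓗) - T) v
          = (Ring.inverse ((circleMap c r θ) • (1 : 𝓗 →L[ℂ] 𝓗) - T) *
              ((circleMap c r θ) • (1 : 𝓗 →L[ℂ] 𝓗) - T)) ((circleMap c r θ - μ)⁻¹ • v) := by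
            rw [ContinuousLinearMap.mul_apply, hw]
        _ = (circleMap c r θ - μ)⁻¹ • v := by
            rw [Ring.inverse_mul_cancel _ hu, ContinuousLinearMap.one_apply]
    have hfun : (fun θ : ℝ =>
          deriv (circleMap c r) θ • Ring.inverse ((circleMap c r θ) • (1 : 𝓗 →L[ℂ] 𝓗) - T))
        = fun θ : ℝ => L (deriv (circleMap c r) θ • F.curry θ) :=
      funext fun θ => by rw [hres θ]; exact (L.map_smul _ _).symm
    have hOpInt : IntervalIntegrable
        (fun θ : ℝ =>
          deriv (circleMap c r) θ • Ring.inverse ((circleMap c r θ) • (1 : 𝓗 →L[ℂ] 𝓗) - T))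
        volume 0 (2 * Real.pi) := by
      rw [hfun]
      exact (L.continuous.comp hIcont).intervalIntegrable _ _
    have hv1 : (∮ z in C(c, r), Ring.inverse (z • (1 : 𝓗 →L[ℂ] 𝓗) - T)) v
        = (2 * (Real.pi : ℂ) * Complex.I) • v := by
      have h2 : (∮ z in C(c, r), Ring.inverse (z • (1 : 𝓗 →L[ℂ] 𝓗) - T))
          = ∫ θ in (0:ℝ)..(2 * Real.pi),
              deriv (circleMap c r) θ • Ring.inverse ((circleMap c r θ) • (1 : 𝓗 →L[ℂ] 𝓗) - T) := by
        simp only [circleIntegral]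
      rw [h2]
      have h3 : (∫ θ in (0:ℝ)..(2 * Real.pi),
            deriv (circleMap c r) θ • Ring.inverse ((circleMap c r θ) • (1 : 𝓗 →L[ℂ] 𝓗) - T)) v
          = ∫ θ in (0:ℝ)..(2 * Real.pi),
              deriv (circleMap c r) θ •
                (Ring.inverse ((circleMap c r θ) • (1 : 𝓗 →L[ℂ] 𝓗) - T) v) := by
        rw [show ((∫ θ in (0:ℝ)..(2 * Real.pi),
            deriv (circleMap c r) θ • Ring.inverse ((circleMap c r θ) • (1 : 𝓗 →L[ℂ] 𝓗) - T)) v)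
          = (ContinuousLinearMap.apply ℂ 𝓗 v) (∫ θ in (0:ℝ)..(2 * Real.pi),
            deriv (circleMap c r) θ • Ring.inverse ((circleMap c r θ) • (1 : 𝓗 →L[ℂ] 𝓗) - T))
          from rfl]
        rw [← (ContinuousLinearMap.apply ℂ 𝓗 v).intervalIntegral_comp_comm hOpInt]
        exact intervalIntegral.integral_congr fun θ _ => rfl
      rw [h3]
      have h4 : ∀ θ : ℝ, deriv (circleMap c r) θ •
            (Ring.inverse ((circleMap c r θ) • (1 : 𝓗 →L[ℂ] 𝓗) - T) v)
          = (deriv (circleMap c r) θ * (circleMap c r θ - μ)⁻¹) • v := by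
        intro θ
        rw [happ θ, smul_smul]
      simp only [h4]
      rw [intervalIntegral.integral_smul_const]
      have h5 : (∫ θ in (0:ℝ)..(2 * Real.pi),
            deriv (circleMap c r) θ * (circleMap c r θ - μ)⁻¹)
          = ∮ z in C(c, r), (z - μ)⁻¹ := by
        simp only [circleIntegral, smul_eq_mul]
      rw [h5, circleIntegral.integral_sub_inv_of_mem_ball hμ]
    rw [hΓ, ContinuousLinearMap.smul_apply, hv1, smul_smul, inv_mul_cancel₀ hπ, one_smul]
  -- membership of `Γ x` in the closed span of the eigenspaces
  have hmem1 : ∀ x : 𝓗,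
      Γ x ∈ (⨆ i, Module.End.eigenspace (T : 𝓗 →ₗ[ℂ] 𝓗) (E i)).topologicalClosure := by
    intro x
    have hFr : ∀ μ ∈ (Set.finite_range E).toFinset, μ ∈ Set.range E :=
      fun μ h => (Set.Finite.mem_toFinset _).mp h
    set Ffin := (Set.finite_range E).toFinset with hFdef
    have hclop : ∀ μ ∈ Set.range E, IsClopen {y : S | (y : ℂ) = μ} := by
      intro μ hμ
      constructor
      · exact isClosed_eq continuous_subtype_val continuous_const
      · have heq : {y : S | (y : ℂ) = μ} =
            Subtype.val ⁻¹' (ball c r \ ((Ffin : Set ℂ) \ {μ})) := by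
          ext y
          simp only [Set.mem_setOf_eq, Set.mem_preimage, Set.mem_diff, Set.mem_singleton_iff,
            Finset.mem_coe]
          constructor
          · intro h
            exact ⟨by rw [h]; exact (hranges hμ).2, fun hc => hc.2 h⟩
          · rintro ⟨hb, hn⟩
            have hyr : (y : ℂ) ∈ Set.range E := by rw [← hspec]; exact ⟨y.2, hb⟩
            by_contra hne'
            exact hn ⟨(Set.Finite.mem_toFinset _).mpr hyr, hne'⟩
        rw [heq]
        refine (IsOpen.sdiff isOpen_ball ?_).preimage continuous_subtype_val
        exact (Ffin.finite_toSet.diff).isClosed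
    let e : (μ : ℂ) → μ ∈ Set.range E → C(S, ℂ) := fun μ hμ =>
      ⟨fun y => if y ∈ {y : S | (y : ℂ) = μ} then (1 : ℂ) else 0,
        aux_indicator_continuous (hclop μ hμ)⟩
    have hχsum : χ = ∑ μ ∈ Ffin.attach, e μ.1 (hFr μ.1 μ.2) := by
      ext y
      rw [hχ_apply y, ContinuousMap.sum_apply]
      have h1 : (∑ μ ∈ Ffin.attach, e μ.1 (hFr μ.1 μ.2) y)
          = ∑ μ ∈ Ffin, (if (y : ℂ) = μ then (1 : ℂ) else 0) := by
        rw [← Finset.sum_attach Ffin fun μ => if (y : ℂ) = μ then (1 : ℂ) else 0]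
        exact Finset.sum_congr rfl fun μ _ => by simp [e, Set.mem_setOf_eq]
      rw [h1, Finset.sum_ite_eq Ffin ((y : ℂ)) fun _ => (1 : ℂ)]
      by_cases hb : (y : ℂ) ∈ ball c r
      · have hmem : (y : ℂ) ∈ Ffin :=
          (Set.Finite.mem_toFinset _).mpr (by rw [← hspec]; exact ⟨y.2, hb⟩)
        simp [hb, hmem]
      · have hmem : (y : ℂ) ∉ Ffin := fun h => hb (hranges (hFr _ h)).2
        simp [hb, hmem]
    have hpiece : ∀ (μ : ℂ) (hμ : μ ∈ Set.range E) (w : 𝓗),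
        φ (e μ hμ) w ∈ ⨆ i, Module.End.eigenspace (T : 𝓗 →ₗ[ℂ] 𝓗) (E i) := by
      intro μ hμ w
      have hTμ : T * φ (e μ hμ) = μ • φ (e μ hμ) := by
        have hid : φ ((ContinuousMap.id ℂ).restrict S) = T := cfcHom_id hN
        rw [← hid, ← map_mul, ← _root_.map_smul φ]
        congr 1
        ext y
        simp only [ContinuousMap.mul_apply, ContinuousMap.smul_apply,
          ContinuousMap.restrict_apply, ContinuousMap.id_apply, smul_eq_mul]
        by_cases h : (y : ℂ) = μ <;> simp [e, Set.mem_setOf_eq, h]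
      have happly : T (φ (e μ hμ) w) = μ • (φ (e μ hμ) w) := by
        have h6 := congrArg (fun A : 𝓗 →L[ℂ] 𝓗 => A w) hTμ
        simpa only [ContinuousLinearMap.mul_apply, ContinuousLinearMap.smul_apply] using h6
      obtain ⟨i, rfl⟩ := hμ
      exact le_iSup (fun i => Module.End.eigenspace (T : 𝓗 →ₗ[ℂ] 𝓗) (E i)) i
        (Module.End.mem_eigenspace_iff.mpr happly)
    rw [hΓφ, hχsum, map_sum, ContinuousLinearMap.sum_apply]
    exact Submodule.sum_mem _ fun μ _ =>
      Submodule.le_topologicalClosure _ (hpiece μ.1 (hFr μ.1 μ.2) x)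
  -- orthogonality of the complement
  have hmem2 : ∀ x : 𝓗, x - Γ x ∈
      ((⨆ i, Module.End.eigenspace (T : 𝓗 →ₗ[ℂ] 𝓗) (E i)).topologicalClosure)ᗮ := by
    intro x
    rw [Submodule.mem_orthogonal]
    intro u hu
    have hcl : IsClosed {u : 𝓗 | ⟪u, x - Γ x⟫ = 0} :=
      isClosed_eq (continuous_id.inner continuous_const) continuous_const
    have hW : ∀ u ∈ (⨆ i, Module.End.eigenspace (T : 𝓗 →ₗ[ℂ] 𝓗) (E i)),
        ⟪u, x - Γ x⟫ = 0 := by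
      intro u hu'
      refine Submodule.iSup_induction _ (motive := fun u => ⟪u, x - Γ x⟫ = 0) hu' ?_ ?_ ?_
      · intro i v hv
        have hvv : T v = E i • v := by
          have h1 := Module.End.mem_eigenspace_iff.mp hv
          simpa using h1
        have hfixv : Γ v = v := hfix (E i) (hErange i).2 v hvv
        rw [inner_sub_right]
        have h3 := ContinuousLinearMap.adjoint_inner_left Γ x v
        rw [hsa, hfixv] at h3
        rw [← h3, sub_self]
      · simp
      · intro a b ha hb
        rw [inner_add_left, ha, hb, add_zero]
    have hsubset :
        (((⨆ i, Module.End.eigenspace (T : 𝓗 →ₗ[ℂ] 𝓗) (E i)).topologicalClosure : Submodule ℂ 𝓗) :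
          Set 𝓗) ⊆ {u : 𝓗 | ⟪u, x - Γ x⟫ = 0} := by
      rw [Submodule.topologicalClosure_coe]
      exact closure_minimal (fun u hu' => hW u hu') hcl
    exact hsubset hu
  exact ⟨hidem, hsa, fun x => ⟨hmem1 x, hmem2 x⟩⟩
end

section
/- Let t1, t2 : ℕ → ℝ satisfy t1(m) ≠ 0 and t2(m) ≠ 0 for all m ≥ 1, and suppose there exist M ≥ 1 and nonzero reals t1∞, t2∞ with |t1∞| < |t2∞| such that t1(m) = t1∞ and t2(m) = t2∞ for all m ≥ M. Define ψ : ℕ → ℂ² by ψ_0 = 0 and, for m ≥ 1, ψ_m = ( ∏_{j=1}^{m−1} (−t1(j)/t2(j)), 0 ). Then ψ is not identically zero, ∑_{m≥1} ‖ψ_m‖² < ∞, and for every m ≥ 1 one has A(m−1)ᵀ ψ_{m−1} + V(m) ψ_m + A(m) ψ_{m+1} = 0. In particular, 0 is an eigenvalue of the SSH edge Hamiltonian with an ℓ² eigenvector (edge state) ψ. -/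
/-!
Since `t2 m ≠ 0`, the first components `p m = ∏_{1 ≤ j < m} (-t1 j / t2 j)` obey
`t1 m p m + t2 m p (m+1) = 0`, which is exactly the second row of the eigenvalue equation; the
first row vanishes because the second components of `ψ` do. From `M` on the ratio
`|p (m+1)| / |p m| = |t1∞| / |t2∞|` is a constant below one, so the ratio test gives
square-summability.
-/

open Filter Finset Matrix

theorem summable_norm_prod_Ico_pow {R : Type*} [SeminormedCommRing R] (c : ℕ → R) {r : ℝ}
    (hr : r < 1) (hc : ∀ᶠ j in atTop, ‖c j‖ ≤ r) {n : ℕ} (hn : n ≠ 0) :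
    Summable fun m => ‖∏ j ∈ Ico 1 m, c j‖ ^ n := by
  have hr₀ : 0 ≤ r := by
    obtain ⟨j, hj⟩ := hc.exists
    exact (norm_nonneg _).trans hj
  refine summable_of_ratio_norm_eventually_le (pow_lt_one₀ hr₀ hr hn) ?_
  filter_upwards [hc, eventually_ge_atTop 1] with m hcm hm
  rw [Real.norm_of_nonneg (by positivity), Real.norm_of_nonneg (by positivity),
    prod_Ico_succ_top hm]
  calc ‖(∏ j ∈ Ico 1 m, c j) * c m‖ ^ n ≤ (‖∏ j ∈ Ico 1 m, c j‖ * ‖c m‖) ^ n := by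
        gcongr; exact norm_mul_le _ _
    _ = ‖∏ j ∈ Ico 1 m, c j‖ ^ n * ‖c m‖ ^ n := mul_pow _ _ _
    _ ≤ ‖∏ j ∈ Ico 1 m, c j‖ ^ n * r ^ n := by gcongr
    _ = r ^ n * ‖∏ j ∈ Ico 1 m, c j‖ ^ n := mul_comm _ _

theorem mul_prod_Ico_neg_div_add_mul_prod_Ico_neg_div {K : Type*} [Field K] (a b : ℕ → K)
    {m : ℕ} (hm : 1 ≤ m) (hb : b m ≠ 0) :
    a m * ∏ j ∈ Ico 1 m, (-a j / b j) + b m * ∏ j ∈ Ico 1 (m + 1), (-a j / b j) = 0 := by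
  rw [prod_Ico_succ_top hm]
  field_simp
  ring

theorem ssh_blocks_mulVec_of_snd_eq_zero {R : Type*} [CommRing R] (a b c : R)
    (u v w : Fin 2 → R) (hu : u 1 = 0) (hv : v 1 = 0) :
    (!![0, 0; a, 0])ᵀ *ᵥ u + !![0, b; b, 0] *ᵥ v + !![0, 0; c, 0] *ᵥ w =
      ![0, b * v 0 + c * w 0] := by
  ext i
  fin_cases i <;> simp [dotProduct, Fin.sum_univ_two, hu, hv]

open Matrix in
theorem stmt_2_general (t1 t2 : ℕ → ℝ)
    (h2 : ∀ m, 1 ≤ m → t2 m ≠ 0)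
    (M : ℕ) (t1i t2i : ℝ)
    (hlt : |t1i| < |t2i|)
    (he1 : ∀ m, M ≤ m → t1 m = t1i) (he2 : ∀ m, M ≤ m → t2 m = t2i)
    (ψ : ℕ → Fin 2 → ℂ)
    (hψ0 : ψ 0 = 0)
    (hψ : ∀ m, 1 ≤ m → ψ m = fun i =>
      if i = 0 then ∏ j ∈ Finset.Ico 1 m, (-(t1 j : ℂ) / (t2 j : ℂ)) else 0) :
    ψ ≠ 0 ∧
    Summable (fun m : ℕ => ‖ψ m 0‖ ^ 2 + ‖ψ m 1‖ ^ 2) ∧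
    ∀ m, 1 ≤ m →
      (!![(0 : ℂ), 0; (t2 (m - 1) : ℂ), 0])ᵀ.mulVec (ψ (m - 1)) +
        (!![(0 : ℂ), (t1 m : ℂ); (t1 m : ℂ), 0]).mulVec (ψ m) +
        (!![(0 : ℂ), 0; (t2 m : ℂ), 0]).mulVec (ψ (m + 1)) = 0 := by
  have hψ_fst : ∀ m, 1 ≤ m → ψ m 0 = ∏ j ∈ Ico 1 m, (-(t1 j : ℂ) / (t2 j : ℂ)) := by
    intro m hm
    simp [hψ m hm]
  have hψ_snd : ∀ m, ψ m 1 = 0 := by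
    intro m
    rcases Nat.eq_zero_or_pos m with rfl | hm
    · simp [hψ0]
    · simp [hψ m hm]
  refine ⟨fun h => by simpa [h] using hψ_fst 1 le_rfl, ?_, fun m hm => ?_⟩
  · have hratio : ∀ᶠ j in atTop, ‖-(t1 j : ℂ) / (t2 j : ℂ)‖ ≤ |t1i| / |t2i| :=
      eventually_atTop.2 ⟨M, fun j hj => by simp [he1 j hj, he2 j hj]⟩
    have hsum := summable_norm_prod_Ico_pow _
      ((div_lt_one ((abs_nonneg _).trans_lt hlt)).2 hlt) hratio two_ne_zero
    rw [← summable_nat_add_iff 1] at hsum ⊢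
    simpa [hψ_snd, hψ_fst _ (Nat.le_add_left 1 _)] using hsum
  · rw [ssh_blocks_mulVec_of_snd_eq_zero _ _ _ _ _ _ (hψ_snd _) (hψ_snd _), hψ_fst m hm,
      hψ_fst (m + 1) (by omega), mul_prod_Ico_neg_div_add_mul_prod_Ico_neg_div (fun j => (t1 j : ℂ))
        (fun j => (t2 j : ℂ)) hm (by exact_mod_cast h2 m hm)]
    simp

open Matrix in
/-- Existence of the zero-energy edge state of the SSH edge Hamiltonian (with zero onsite
potentials) when `|t1∞| < |t2∞|`: the explicitly given sequence `ψ` is a nonzero square-summable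
solution of `A(m-1)ᵀ ψ_{m-1} + V(m) ψ_m + A(m) ψ_{m+1} = 0` for all `m ≥ 1`. -/
theorem stmt_2 (t1 t2 : ℕ → ℝ)
    (h1 : ∀ m, 1 ≤ m → t1 m ≠ 0) (h2 : ∀ m, 1 ≤ m → t2 m ≠ 0)
    (M : ℕ) (hM : 1 ≤ M) (t1i t2i : ℝ) (ht1 : t1i ≠ 0) (ht2 : t2i ≠ 0)
    (hlt : |t1i| < |t2i|)
    (he1 : ∀ m, M ≤ m → t1 m = t1i) (he2 : ∀ m, M ≤ m → t2 m = t2i)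
    (ψ : ℕ → Fin 2 → ℂ)
    (hψ0 : ψ 0 = 0)
    (hψ : ∀ m, 1 ≤ m → ψ m = fun i =>
      if i = 0 then ∏ j ∈ Finset.Ico 1 m, (-(t1 j : ℂ) / (t2 j : ℂ)) else 0) :
    ψ ≠ 0 ∧
    Summable (fun m : ℕ => ‖ψ m 0‖ ^ 2 + ‖ψ m 1‖ ^ 2) ∧
    ∀ m, 1 ≤ m →
      (!![(0 : ℂ), 0; (t2 (m - 1) : ℂ), 0])ᵀ.mulVec (ψ (m - 1)) +
        (!![(0 : ℂ), (t1 m : ℂ); (t1 m : ℂ), 0]).mulVec (ψ m) +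
        (!![(0 : ℂ), 0; (t2 m : ℂ), 0]).mulVec (ψ (m + 1)) = 0 :=
  stmt_2_general t1 t2 h2 M t1i t2i hlt he1 he2 ψ hψ0 hψ
end

section
/- Let t1, t2 : ℕ → ℝ satisfy t1(m) ≠ 0 and t2(m) ≠ 0 for all m ≥ 1, and suppose there exist M ≥ 1 and nonzero reals t1∞, t2∞ with |t1∞| ≥ |t2∞| such that t1(m) = t1∞ and t2(m) = t2∞ for all m ≥ M. If ψ : ℕ → ℂ² satisfies ψ_0 = 0, ∑_{m≥1} ‖ψ_m‖² < ∞, and A(m−1)ᵀ ψ_{m−1} + V(m) ψ_m + A(m) ψ_{m+1} = 0 for all m ≥ 1, then ψ_m = 0 for all m. In particular, 0 is not an eigenvalue of the SSH edge Hamiltonian in this case. -/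
/-!
At zero energy the two sublattices decouple: the second components satisfy a first-order
recursion started from `ψ_0 = 0`, so they vanish, while the first components satisfy
`t1(m) ψ_m + t2(m) ψ_{m+1} = 0`. For `m ≥ M` this gives `|t1∞| ‖ψ_m‖ = |t2∞| ‖ψ_{m+1}‖`, so
`‖ψ_m‖` is nondecreasing there; being square-summable it tends to `0`, hence vanishes from `M`
on, and the same recursion run backwards clears the finitely many remaining indices.
-/

open Matrix Filter Topology

theorem mulVec_ssh_eq_zero_iff {R : Type*} [Semiring R] (a b c : R) (u v w : Fin 2 → R) :
    (!![0, 0; a, 0])ᵀ *ᵥ u + !![0, b; b, 0] *ᵥ v + !![0, 0; c, 0] *ᵥ w = 0 ↔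
      a * u 1 + b * v 1 = 0 ∧ b * v 0 + c * w 0 = 0 := by
  simp [funext_iff, Fin.forall_fin_two, dotProduct, Fin.sum_univ_two]

theorem eq_zero_of_mul_add_mul_succ_eq_zero {R : Type*} [Ring R] [NoZeroDivisors R]
    {a b x : ℕ → R} (h0 : x 0 = 0) (hb : ∀ n, b (n + 1) ≠ 0)
    (h : ∀ n, a n * x n + b (n + 1) * x (n + 1) = 0) (n : ℕ) : x n = 0 := by
  induction n with
  | zero => exact h0
  | succ n ih =>
    have := h n
    rw [ih, mul_zero, zero_add] at this
    exact (mul_eq_zero.mp this).resolve_left (hb n)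

theorem eq_zero_of_eventually_zero_of_mul_add_mul_succ_eq_zero {R : Type*} [Ring R]
    [NoZeroDivisors R] {a c x : ℕ → R} {M : ℕ} (h0 : x 0 = 0) (hM : ∀ n, M ≤ n → x n = 0)
    (ha : ∀ n, 1 ≤ n → a n ≠ 0) (h : ∀ n, 1 ≤ n → a n * x n + c n * x (n + 1) = 0) (n : ℕ) :
    x n = 0 := by
  suffices ∀ k n, M ≤ n + k → x n = 0 from this (M - n) n (by omega)
  intro k
  induction k with
  | zero => exact hM
  | succ k ih =>
    rintro (_ | n) hn
    · exact h0
    · have := h (n + 1) n.succ_pos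
      rw [ih (n + 2) (by omega), mul_zero, add_zero] at this
      exact (mul_eq_zero.mp this).resolve_left (ha _ n.succ_pos)

theorem Summable.nonpos_of_le_succ {u : ℕ → ℝ} (hu : Summable u) {M : ℕ}
    (hmono : ∀ n, M ≤ n → u n ≤ u (n + 1)) {n : ℕ} (hn : M ≤ n) : u n ≤ 0 := by
  have hshift : Monotone fun k => u (M + k) :=
    monotone_nat_of_le_succ fun k => hmono (M + k) (Nat.le_add_right M k)
  have hlim : Tendsto (fun k => u (M + k)) atTop (𝓝 0) :=
    (tendsto_add_atTop_iff_nat M).2 hu.tendsto_atTop_zero |>.congr fun k => by rw [add_comm]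
  simpa [Nat.add_sub_cancel' hn] using hshift.ge_of_tendsto hlim (n - M)

theorem norm_le_norm_of_mul_add_mul_eq_zero {𝕜 : Type*} [NormedDivisionRing 𝕜] {a c y z : 𝕜}
    (ha : a ≠ 0) (hca : ‖c‖ ≤ ‖a‖) (h : a * y + c * z = 0) : ‖y‖ ≤ ‖z‖ := by
  have hnorm : ‖a‖ * ‖y‖ = ‖c‖ * ‖z‖ := by
    rw [← norm_mul, ← norm_mul, eq_neg_of_add_eq_zero_left h, norm_neg]
  refine le_of_mul_le_mul_left ?_ (norm_pos_iff.2 ha)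
  rw [hnorm]
  exact mul_le_mul_of_nonneg_right hca (norm_nonneg z)

open Matrix in
theorem stmt_3_general (t1 t2 : ℕ → ℝ)
    (h1 : ∀ m, 1 ≤ m → t1 m ≠ 0)
    (M : ℕ) (hM : 1 ≤ M) (t1i t2i : ℝ) (ht1 : t1i ≠ 0)
    (hge : |t2i| ≤ |t1i|)
    (he1 : ∀ m, M ≤ m → t1 m = t1i) (he2 : ∀ m, M ≤ m → t2 m = t2i)
    (ψ : ℕ → Fin 2 → ℂ)
    (hψ0 : ψ 0 = 0)
    (hsum : Summable (fun m : ℕ => ‖ψ m 0‖ ^ 2 + ‖ψ m 1‖ ^ 2))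
    (heq : ∀ m, 1 ≤ m →
      (!![(0 : ℂ), 0; (t2 (m - 1) : ℂ), 0])ᵀ.mulVec (ψ (m - 1)) +
        (!![(0 : ℂ), (t1 m : ℂ); (t1 m : ℂ), 0]).mulVec (ψ m) +
        (!![(0 : ℂ), 0; (t2 m : ℂ), 0]).mulVec (ψ (m + 1)) = 0) :
    ∀ m, ψ m = 0 := by
  have hcomp m (hm : 1 ≤ m) := (mulVec_ssh_eq_zero_iff _ _ _ _ _ _).1 (heq m hm)
  have ht1c m (hm : 1 ≤ m) : (t1 m : ℂ) ≠ 0 := Complex.ofReal_ne_zero.2 (h1 m hm)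
  have hψ1 : ∀ m, ψ m 1 = 0 :=
    eq_zero_of_mul_add_mul_succ_eq_zero (a := fun n => (t2 n : ℂ)) (b := fun n => (t1 n : ℂ))
      (congrFun hψ0 1) (fun n => ht1c (n + 1) n.succ_pos)
      fun n => by simpa using (hcomp (n + 1) n.succ_pos).1
  have hmono m (hm : M ≤ m) : ‖ψ m 0‖ ^ 2 ≤ ‖ψ (m + 1) 0‖ ^ 2 := by
    have h := (hcomp m (hM.trans hm)).2
    rw [he1 m hm, he2 m hm] at h
    gcongr
    exact norm_le_norm_of_mul_add_mul_eq_zero (Complex.ofReal_ne_zero.2 ht1) (by simpa) h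
  have hsum0 : Summable fun m => ‖ψ m 0‖ ^ 2 :=
    hsum.of_nonneg_of_le (fun _ => by positivity) fun _ => le_add_of_nonneg_right (by positivity)
  have hψ0tail m (hm : M ≤ m) : ψ m 0 = 0 := by
    simpa using hsum0.nonpos_of_le_succ hmono hm
  have hψ0' : ∀ m, ψ m 0 = 0 :=
    eq_zero_of_eventually_zero_of_mul_add_mul_succ_eq_zero (congrFun hψ0 0) hψ0tail ht1c
      fun n hn => (hcomp n hn).2
  intro m
  ext i
  fin_cases i
  exacts [hψ0' m, hψ1 m]

open Matrix in
/-- Nonexistence of a zero-energy edge state of the SSH edge Hamiltonian (with zero onsite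
potentials) when `|t1∞| ≥ |t2∞|`: any square-summable solution of
`A(m-1)ᵀ ψ_{m-1} + V(m) ψ_m + A(m) ψ_{m+1} = 0` (for all `m ≥ 1`) with `ψ_0 = 0` vanishes. -/
theorem stmt_3 (t1 t2 : ℕ → ℝ)
    (h1 : ∀ m, 1 ≤ m → t1 m ≠ 0) (h2 : ∀ m, 1 ≤ m → t2 m ≠ 0)
    (M : ℕ) (hM : 1 ≤ M) (t1i t2i : ℝ) (ht1 : t1i ≠ 0) (ht2 : t2i ≠ 0)
    (hge : |t2i| ≤ |t1i|)
    (he1 : ∀ m, M ≤ m → t1 m = t1i) (he2 : ∀ m, M ≤ m → t2 m = t2i)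
    (ψ : ℕ → Fin 2 → ℂ)
    (hψ0 : ψ 0 = 0)
    (hsum : Summable (fun m : ℕ => ‖ψ m 0‖ ^ 2 + ‖ψ m 1‖ ^ 2))
    (heq : ∀ m, 1 ≤ m →
      (!![(0 : ℂ), 0; (t2 (m - 1) : ℂ), 0])ᵀ.mulVec (ψ (m - 1)) +
        (!![(0 : ℂ), (t1 m : ℂ); (t1 m : ℂ), 0]).mulVec (ψ m) +
        (!![(0 : ℂ), 0; (t2 m : ℂ), 0]).mulVec (ψ (m + 1)) = 0) :
    ∀ m, ψ m = 0 :=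
  stmt_3_general t1 t2 h1 M hM t1i t2i ht1 hge he1 he2 ψ hψ0 hsum heq
end

section
/- Let t1, t2 be nonzero real numbers and let z ∈ ℂ satisfy z ∉ Σ(t1,t2) := {E ∈ ℝ : | |t1| − |t2| | ≤ |E| ≤ |t1| + |t2|}. Then the 2×2 complex transfer matrix T(z) = [[−t1/t2, z/t2], [−z/t2, z²/(t1·t2) − t2/t1]] has precisely one eigenvalue λ with |λ| < 1 and precisely one eigenvalue μ with |μ| > 1, and λ·μ = 1. -/
/-!
`T(z)` has determinant `1` and trace `τ = (z² - t1² - t2²) / (t1 t2)`, so its eigenvalues are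
`λ` and `λ⁻¹`. If `|λ| = 1`, then `λ⁻¹ = conj λ` and `τ = 2 Re λ ∈ [-2, 2]`, so
`z² = t1² + t2² + τ t1 t2` is real and lies in `[(|t1| - |t2|)², (|t1| + |t2|)²]`; hence `z` is a
real point of `Σ(t1,t2)`. Off the spectrum therefore `|λ| ≠ 1`, and one eigenvalue lies strictly
inside the unit circle, the other strictly outside.
-/

theorem Matrix.exists_charpoly_roots_eq_pair {K : Type*} [Field K] [IsAlgClosed K]
    (A : Matrix (Fin 2) (Fin 2) K) :
    ∃ l m : K, A.charpoly.roots = {l, m} ∧ l * m = A.det ∧ l + m = A.trace := by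
  obtain ⟨l, m, hlm⟩ : ∃ l m : K, A.charpoly.roots = {l, m} := by
    rw [← Multiset.card_eq_two, IsAlgClosed.card_roots_eq_natDegree,
      A.charpoly_natDegree_eq_dim, Fintype.card_fin]
  refine ⟨l, m, hlm, ?_, ?_⟩
  · simp [A.det_eq_prod_roots_charpoly, hlm]
  · simp [A.trace_eq_sum_roots_charpoly, hlm]

theorem Complex.add_inv_eq_two_mul_re {l : ℂ} (hl : ‖l‖ = 1) : l + l⁻¹ = (2 * l.re : ℝ) := by
  rw [Complex.inv_eq_conj hl, Complex.add_conj]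

theorem exists_ofReal_eq_of_sq_eq_ofReal {z : ℂ} {r : ℝ} (hr : 0 ≤ r) (hz : z ^ 2 = r) :
    ∃ E : ℝ, z = E ∧ E ^ 2 = r := by
  have hsq : z ^ 2 = ((√r : ℝ) : ℂ) ^ 2 := by
    rw [hz, ← Complex.ofReal_pow, Real.sq_sqrt hr]
  rcases sq_eq_sq_iff_eq_or_eq_neg.mp hsq with h | h
  · exact ⟨√r, h, Real.sq_sqrt hr⟩
  · exact ⟨-√r, by rw [h, Complex.ofReal_neg], by rw [neg_sq, Real.sq_sqrt hr]⟩

theorem sq_add_sq_add_mul_mem_Icc {a b s : ℝ} (hs : |s| ≤ 2) :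
    a ^ 2 + b ^ 2 + s * (a * b) ∈ Set.Icc ((|a| - |b|) ^ 2) ((|a| + |b|) ^ 2) := by
  have hab : |s * (a * b)| ≤ 2 * (|a| * |b|) := by
    rw [abs_mul, abs_mul]
    exact mul_le_mul_of_nonneg_right hs (by positivity)
  have h := abs_le.mp hab
  constructor <;> nlinarith [sq_abs a, sq_abs b]

theorem exists_norm_lt_one_of_mul_eq_one {K : Type*} [NormedField K] {l m : K}
    (hlm : l * m = 1) (hl : ‖l‖ ≠ 1) :
    ∃ a b : K, ‖a‖ < 1 ∧ 1 < ‖b‖ ∧ a * b = 1 ∧ ({a, b} : Multiset K) = {l, m} := by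
  have hnorm : ‖l‖ * ‖m‖ = 1 := by rw [← norm_mul, hlm, norm_one]
  rcases hl.lt_or_gt with hlt | hgt
  · refine ⟨l, m, hlt, ?_, hlm, rfl⟩
    nlinarith [norm_nonneg l]
  · refine ⟨m, l, ?_, hgt, by rwa [mul_comm], Multiset.pair_comm m l⟩
    nlinarith [norm_nonneg m]

theorem exists_ofReal_eq_of_sq_eq_add_mul {t1 t2 s : ℝ} {z : ℂ} (hs : |s| ≤ 2)
    (hz : z ^ 2 = t1 ^ 2 + t2 ^ 2 + s * (t1 * t2)) :
    ∃ E : ℝ, z = E ∧ |(|t1| - |t2|)| ≤ |E| ∧ |E| ≤ |t1| + |t2| := by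
  obtain ⟨hlow, hupp⟩ := sq_add_sq_add_mul_mem_Icc (a := t1) (b := t2) hs
  obtain ⟨E, rfl, hE⟩ := exists_ofReal_eq_of_sq_eq_ofReal (le_trans (sq_nonneg _) hlow)
    (by rw [hz]; push_cast; ring)
  refine ⟨E, rfl, sq_le_sq.mp (hE ▸ hlow), ?_⟩
  exact (sq_le_sq.mp (hE ▸ hupp)).trans_eq (abs_of_nonneg (by positivity))

noncomputable def sshTransfer (t1 t2 : ℝ) (z : ℂ) : Matrix (Fin 2) (Fin 2) ℂ :=
  !![-(t1 : ℂ) / t2, z / t2; -z / t2, z ^ 2 / ((t1 : ℂ) * t2) - (t2 : ℂ) / t1]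

theorem sshTransfer_det {t1 t2 : ℝ} (ht1 : t1 ≠ 0) (ht2 : t2 ≠ 0) (z : ℂ) :
    (sshTransfer t1 t2 z).det = 1 := by
  have : (t1 : ℂ) ≠ 0 := by exact_mod_cast ht1
  have : (t2 : ℂ) ≠ 0 := by exact_mod_cast ht2
  rw [sshTransfer, Matrix.det_fin_two_of]
  field_simp
  ring

theorem sq_eq_add_trace_sshTransfer_mul {t1 t2 : ℝ} (ht1 : t1 ≠ 0) (ht2 : t2 ≠ 0) (z : ℂ) :
    z ^ 2 = t1 ^ 2 + t2 ^ 2 + (sshTransfer t1 t2 z).trace * (t1 * t2) := by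
  have : (t1 : ℂ) ≠ 0 := by exact_mod_cast ht1
  have : (t2 : ℂ) ≠ 0 := by exact_mod_cast ht2
  rw [sshTransfer, Matrix.trace_fin_two_of]
  field_simp
  ring

open Matrix in
/-- Outside the bulk SSH spectrum `Σ(t1,t2)`, the SSH transfer matrix `T(z)` has precisely one
eigenvalue `λ` of modulus `< 1` and one eigenvalue `μ` of modulus `> 1`, with `λ·μ = 1`
(the multiset of roots of its characteristic polynomial is `{λ, μ}`). -/
theorem stmt_5 (t1 t2 : ℝ) (ht1 : t1 ≠ 0) (ht2 : t2 ≠ 0) (z : ℂ)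
    (hz : z ∉ {w : ℂ | ∃ E : ℝ, w = (E : ℂ) ∧
      |(|t1| - |t2|)| ≤ |E| ∧ |E| ≤ |t1| + |t2|}) :
    ∃ lam mu : ℂ, ‖lam‖ < 1 ∧ 1 < ‖mu‖ ∧ lam * mu = 1 ∧
      (!![-(t1 : ℂ) / t2, z / t2;
          -z / t2, z ^ 2 / ((t1 : ℂ) * t2) - (t2 : ℂ) / t1]).charpoly.roots = {lam, mu} := by
  obtain ⟨l, m, hroots, hprod, hsum⟩ := (sshTransfer t1 t2 z).exists_charpoly_roots_eq_pair
  rw [sshTransfer_det ht1 ht2] at hprod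
  have hl : ‖l‖ ≠ 1 := by
    intro hl
    have htrace : (sshTransfer t1 t2 z).trace = (2 * l.re : ℝ) := by
      rw [← hsum, eq_inv_of_mul_eq_one_right hprod, Complex.add_inv_eq_two_mul_re hl]
    have hre : |2 * l.re| ≤ 2 := by
      rw [abs_mul, abs_two]
      linarith [Complex.abs_re_le_norm l]
    refine hz (exists_ofReal_eq_of_sq_eq_add_mul hre ?_)
    rw [sq_eq_add_trace_sshTransfer_mul ht1 ht2, htrace]
  obtain ⟨lam, mu, hlam, hmu, hprod', hpair⟩ := exists_norm_lt_one_of_mul_eq_one hprod hl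
  exact ⟨lam, mu, hlam, hmu, hprod', hroots.trans hpair.symm⟩
end

section
/- Let t1, t2 be nonzero real numbers and let z ∈ ℂ satisfy z ∉ Σ(t1,t2) := {E ∈ ℝ : | |t1| − |t2| | ≤ |E| ≤ |t1| + |t2|}. Let λ be the unique eigenvalue of the transfer matrix T(z) = [[−t1/t2, z/t2], [−z/t2, z²/(t1·t2) − t2/t1]] with |λ| < 1. If a sequence v : ℕ → ℂ² satisfies v_{m+1} = T(z)·v_m for all m ∈ ℕ and ∑_{m∈ℕ} ‖v_m‖² < ∞, then T(z)·v_0 = λ·v_0, i.e., v_0 lies in the eigenspace of T(z) for the eigenvalue λ. -/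
/-!
Since `det T(z) = 1`, the two roots of the characteristic polynomial of `T(z)` are `λ` and
`μ = tr T(z) - λ = λ⁻¹`, so `‖μ‖ > 1`. By Cayley–Hamilton, `(T - μ)(T - λ) = 0`, hence
`w_m := v_{m+1} - λ v_m = (T - λ) v_m` satisfies `w_{m+1} = μ w_m`. Square summability forces
`v_m → 0`, so `w_m → 0` as well, which is impossible for a nonzero geometric sequence of ratio
`‖μ‖ ≥ 1`. Thus `w_0 = 0`, i.e. `T v_0 = λ v_0`.
-/

open Filter Topology Matrix Polynomial

lemma eq_zero_of_succ_eq_smul_of_tendsto_zero {𝕜 E : Type*} [NormedField 𝕜]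
    [NormedAddCommGroup E] [NormedSpace 𝕜 E] {μ : 𝕜} (hμ : 1 ≤ ‖μ‖) {w : ℕ → E}
    (hw : ∀ m, w (m + 1) = μ • w m) (hlim : Tendsto w atTop (𝓝 0)) : w 0 = 0 := by
  have hmono : Monotone fun m => ‖w m‖ := monotone_nat_of_le_succ fun m => by
    rw [hw, norm_smul]
    exact le_mul_of_one_le_left (norm_nonneg _) hμ
  have : ‖w 0‖ ≤ 0 :=
    ge_of_tendsto (tendsto_norm_zero.comp hlim) (Eventually.of_forall fun m => hmono m.zero_le)
  exact norm_le_zero_iff.mp this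

namespace Matrix

variable {R : Type*} [CommRing R] [Nontrivial R]

lemma mul_trace_sub_eq_det_of_isRoot_charpoly {A : Matrix (Fin 2) (Fin 2) R} {lam : R}
    (h : A.charpoly.IsRoot lam) : lam * (A.trace - lam) = A.det := by
  rw [charpoly_fin_two, IsRoot.def] at h
  simp only [eval_add, eval_sub, eval_mul, eval_pow, eval_X, eval_C] at h
  linear_combination -h

lemma sub_smul_one_mul_sub_smul_one_eq_zero {A : Matrix (Fin 2) (Fin 2) R} {lam : R}
    (h : A.charpoly.IsRoot lam) :
    (A - (A.trace - lam) • (1 : Matrix (Fin 2) (Fin 2) R)) * (A - lam • 1) = 0 := by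
  have hfac : A.charpoly = (X - C (A.trace - lam)) * (X - C lam) := by
    rw [charpoly_fin_two, ← mul_trace_sub_eq_det_of_isRoot_charpoly h]
    simp only [C_mul, C_sub]
    ring
  simpa [hfac, Algebra.algebraMap_eq_smul_one, sub_smul] using A.aeval_self_charpoly

section Orbit

variable {𝕜 n : Type*} [NormedField 𝕜] [Fintype n] [DecidableEq n]

lemma mulVec_eq_smul_of_orbit_tendsto_zero {A : Matrix n n 𝕜} {lam μ : 𝕜}
    (hA : (A - μ • 1) * (A - lam • 1) = 0) (hμ : 1 ≤ ‖μ‖) {v : ℕ → n → 𝕜}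
    (hv : ∀ m, v (m + 1) = A *ᵥ v m) (hlim : Tendsto v atTop (𝓝 0)) :
    A *ᵥ v 0 = lam • v 0 := by
  set w : ℕ → n → 𝕜 := fun m => v (m + 1) - lam • v m
  have hw_eq : ∀ m, w m = (A - lam • 1) *ᵥ v m := fun m => by
    simp [w, hv, sub_mulVec, smul_mulVec, one_mulVec]
  have hw_step : ∀ m, w (m + 1) = μ • w m := fun m => by
    have hker : (A - μ • 1) *ᵥ w m = 0 := by rw [hw_eq, mulVec_mulVec, hA, zero_mulVec]
    rw [sub_mulVec, smul_mulVec, one_mulVec, sub_eq_zero] at hker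
    rw [← hker]
    simp only [w, hv (m + 1), mulVec_sub, mulVec_smul, hv m]
  have hw_lim : Tendsto w atTop (𝓝 0) := by
    simpa using (hlim.comp (tendsto_add_atTop_nat 1)).sub (hlim.const_smul lam)
  rw [← hv, ← sub_eq_zero]
  exact eq_zero_of_succ_eq_smul_of_tendsto_zero hμ hw_step hw_lim

end Orbit

end Matrix

lemma tendsto_zero_of_summable_sum_norm_sq {𝕜 n : Type*} [NormedField 𝕜] [Fintype n]
    {v : ℕ → n → 𝕜} (hsum : Summable fun m => ∑ i, ‖v m i‖ ^ 2) :
    Tendsto v atTop (𝓝 0) := by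
  refine tendsto_pi_nhds.2 fun i => tendsto_zero_iff_norm_tendsto_zero.2 ?_
  have hsq : Tendsto (fun m => ‖v m i‖ ^ 2) atTop (𝓝 0) :=
    squeeze_zero (fun m => by positivity)
      (fun m => Finset.single_le_sum (f := fun j => ‖v m j‖ ^ 2) (fun j _ => by positivity)
        (Finset.mem_univ i))
      hsum.tendsto_atTop_zero
  simpa [Real.sqrt_sq (norm_nonneg _)] using hsq.sqrt

noncomputable def sshTransferMatrix (t1 t2 : ℝ) (z : ℂ) : Matrix (Fin 2) (Fin 2) ℂ :=
  !![-(t1 : ℂ) / t2, z / t2; -z / t2, z ^ 2 / ((t1 : ℂ) * t2) - (t2 : ℂ) / t1]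

lemma sshTransferMatrix_det {t1 t2 : ℝ} (ht1 : t1 ≠ 0) (ht2 : t2 ≠ 0) (z : ℂ) :
    (sshTransferMatrix t1 t2 z).det = 1 := by
  have ht1' : (t1 : ℂ) ≠ 0 := by exact_mod_cast ht1
  have ht2' : (t2 : ℂ) ≠ 0 := by exact_mod_cast ht2
  rw [sshTransferMatrix, det_fin_two_of]
  field_simp
  ring

open Matrix in
theorem stmt_6_general (t1 t2 : ℝ) (ht1 : t1 ≠ 0) (ht2 : t2 ≠ 0) (z : ℂ)
    (lam : ℂ)
    (hlam : (!![-(t1 : ℂ) / t2, z / t2;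
        -z / t2, z ^ 2 / ((t1 : ℂ) * t2) - (t2 : ℂ) / t1]).charpoly.IsRoot lam)
    (hlt : ‖lam‖ < 1)
    (v : ℕ → Fin 2 → ℂ)
    (hrec : ∀ m : ℕ, v (m + 1) = (!![-(t1 : ℂ) / t2, z / t2;
        -z / t2, z ^ 2 / ((t1 : ℂ) * t2) - (t2 : ℂ) / t1]).mulVec (v m))
    (hsum : Summable (fun m : ℕ => ‖v m 0‖ ^ 2 + ‖v m 1‖ ^ 2)) :
    (!![-(t1 : ℂ) / t2, z / t2;
        -z / t2, z ^ 2 / ((t1 : ℂ) * t2) - (t2 : ℂ) / t1]).mulVec (v 0) = lam • v 0 := by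
  set T := sshTransferMatrix t1 t2 z
  have hroot : T.charpoly.IsRoot lam := hlam
  have hprod : lam * (T.trace - lam) = 1 := by
    rw [mul_trace_sub_eq_det_of_isRoot_charpoly hroot, sshTransferMatrix_det ht1 ht2]
  have hμ : 1 ≤ ‖T.trace - lam‖ := by
    have hnorm : ‖lam‖ * ‖T.trace - lam‖ = 1 := by rw [← norm_mul, hprod, norm_one]
    nlinarith [norm_nonneg lam, norm_nonneg (T.trace - lam)]
  exact mulVec_eq_smul_of_orbit_tendsto_zero (sub_smul_one_mul_sub_smul_one_eq_zero hroot) hμ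
    hrec (tendsto_zero_of_summable_sum_norm_sq (by simpa [Fin.sum_univ_two] using hsum))

open Matrix in
/-- For `z` outside the bulk SSH spectrum, if `λ` is the unique eigenvalue of the transfer
matrix `T(z)` with `|λ| < 1`, then any square-summable solution of `v_{m+1} = T(z) v_m` has
initial data `v_0` in the `λ`-eigenspace of `T(z)`. -/
theorem stmt_6 (t1 t2 : ℝ) (ht1 : t1 ≠ 0) (ht2 : t2 ≠ 0) (z : ℂ)
    (hz : z ∉ {w : ℂ | ∃ E : ℝ, w = (E : ℂ) ∧
      |(|t1| - |t2|)| ≤ |E| ∧ |E| ≤ |t1| + |t2|})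
    (lam : ℂ)
    (hlam : (!![-(t1 : ℂ) / t2, z / t2;
        -z / t2, z ^ 2 / ((t1 : ℂ) * t2) - (t2 : ℂ) / t1]).charpoly.IsRoot lam)
    (hlt : ‖lam‖ < 1)
    (huniq : ∀ mu : ℂ, (!![-(t1 : ℂ) / t2, z / t2;
        -z / t2, z ^ 2 / ((t1 : ℂ) * t2) - (t2 : ℂ) / t1]).charpoly.IsRoot mu →
      ‖mu‖ < 1 → mu = lam)
    (v : ℕ → Fin 2 → ℂ)
    (hrec : ∀ m : ℕ, v (m + 1) = (!![-(t1 : ℂ) / t2, z / t2;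
        -z / t2, z ^ 2 / ((t1 : ℂ) * t2) - (t2 : ℂ) / t1]).mulVec (v m))
    (hsum : Summable (fun m : ℕ => ‖v m 0‖ ^ 2 + ‖v m 1‖ ^ 2)) :
    (!![-(t1 : ℂ) / t2, z / t2;
        -z / t2, z ^ 2 / ((t1 : ℂ) * t2) - (t2 : ℂ) / t1]).mulVec (v 0) = lam • v 0 :=
  stmt_6_general t1 t2 ht1 ht2 z lam hlam hlt v hrec hsum
end

section
/- Let N ≥ 1, let S be an invertible 2N×2N complex matrix, and set T = S⁻¹·Sᴴ, where Sᴴ denotes the conjugate transpose of S. Then for every λ ∈ ℂ with λ ≠ 0, the multiplicity of λ as a root of the characteristic polynomial of T equals the multiplicity of 1/conj(λ) as a root of the characteristic polynomial of T. In particular, if λ ≠ 0 is an eigenvalue of T with algebraic multiplicity μ, then so is 1/conj(λ). -/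
/-!
Since `Tᴴ = S T⁻¹ S⁻¹`, the matrices `Tᴴ` and `T⁻¹` have the same characteristic polynomial.
That of `Tᴴ` is the coefficientwise conjugate of `χ_T`, while that of `T⁻¹` is a nonzero multiple
of the reverse of `χ_T`, and reversing a polynomial sends each nonzero root `a` to `a⁻¹` with the
same multiplicity.
-/

open Polynomial

namespace Polynomial

variable {K : Type*} [Field K]

theorem reverse_pow_of_domain {R : Type*} [Semiring R] [NoZeroDivisors R] (p : R[X]) (m : ℕ) :
    (p ^ m).reverse = p.reverse ^ m := by
  induction m with
  | zero => simpa using reverse_C (1 : R)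
  | succ m ih => rw [pow_succ, reverse_mul_of_domain, ih, pow_succ]

theorem reverse_X_sub_C {a : K} (ha : a ≠ 0) : (X - C a).reverse = C (-a) * (X - C a⁻¹) := by
  rw [sub_eq_add_neg, ← C_neg, reverse_add_C, natDegree_X]
  have hX : (X : K[X]).reverse = 1 := by
    rw [← one_mul X, reverse_mul_X, ← C_1, reverse_C]
  rw [hX, pow_one, mul_sub, ← C_mul, neg_mul, mul_inv_cancel₀ ha, C_neg, C_neg, C_1]
  ring

theorem rootMultiplicity_inv_reverse (p : K[X]) {a : K} (ha : a ≠ 0) :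
    p.reverse.rootMultiplicity a⁻¹ = p.rootMultiplicity a := by
  rcases eq_or_ne p 0 with rfl | hp
  · simp
  obtain ⟨q, hpq, hq⟩ := p.exists_eq_pow_rootMultiplicity_mul_and_not_dvd hp a
  have hqa : ¬ q.reverse.IsRoot a⁻¹ := by
    have : Invertible a := invertibleOfNonzero ha
    rwa [IsRoot, ← invOf_eq_inv, ← eval₂_id, eval₂_reverse_eq_zero_iff, eval₂_id, ← IsRoot,
      ← dvd_iff_isRoot]
  have hrev : p.reverse =
      C ((-a) ^ p.rootMultiplicity a) * ((X - C a⁻¹) ^ p.rootMultiplicity a * q.reverse) := by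
    conv_lhs => rw [hpq]
    rw [reverse_mul_of_domain, reverse_pow_of_domain, reverse_X_sub_C ha, mul_pow, C_pow, mul_assoc]
  have hne : p.reverse ≠ 0 := by rwa [Ne, reverse_eq_zero]
  rw [hrev] at hne ⊢
  rw [rootMultiplicity_mul hne, rootMultiplicity_C, rootMultiplicity_mul (right_ne_zero_of_mul hne),
    rootMultiplicity_X_sub_C_pow, rootMultiplicity_eq_zero hqa]
  simp

end Polynomial

namespace Matrix

variable {n : Type*} [Fintype n] [DecidableEq n]

theorem charpoly_conjTranspose {R : Type*} [CommRing R] [StarRing R] (A : Matrix n n R) :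
    Aᴴ.charpoly = A.charpoly.map (starRingEnd R) := by
  rw [← charpoly_transpose, ← charpoly_map]
  rfl

theorem rootMultiplicity_inv_charpoly_inv {K : Type*} [Field K] (A : Matrix n n K)
    (hA : IsUnit A.det) {a : K} (ha : a ≠ 0) :
    A⁻¹.charpoly.rootMultiplicity a⁻¹ = A.charpoly.rootMultiplicity a := by
  rw [charpoly_inv A ((isUnit_iff_isUnit_det A).mpr hA), ← reverse_charpoly, Ring.inverse_eq_inv',
    ← C_1, ← C_neg, ← C_pow, ← C_mul, rootMultiplicity_mul, rootMultiplicity_C, zero_add,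
    rootMultiplicity_inv_reverse _ ha]
  simp [hA.ne_zero, A.charpoly_monic.ne_zero]

theorem conjTranspose_inv_mul_conjTranspose {R : Type*} [CommRing R] [StarRing R]
    (S : Matrix n n R) (hS : IsUnit S.det) : (S⁻¹ * Sᴴ)ᴴ = S * (S⁻¹ * Sᴴ)⁻¹ * S⁻¹ := by
  rw [conjTranspose_mul, conjTranspose_conjTranspose, conjTranspose_nonsing_inv, mul_inv_rev,
    nonsing_inv_nonsing_inv S hS, mul_assoc, mul_assoc, mul_nonsing_inv S hS, mul_one]

end Matrix

open Matrix in
theorem stmt_7_general (N : ℕ) (S : Matrix (Fin (2 * N)) (Fin (2 * N)) ℂ)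
    (hS : IsUnit S.det) (lam : ℂ) (hlam : lam ≠ 0) :
    (S⁻¹ * Sᴴ).charpoly.rootMultiplicity lam =
      (S⁻¹ * Sᴴ).charpoly.rootMultiplicity ((starRingEnd ℂ) lam)⁻¹ := by
  set T := S⁻¹ * Sᴴ
  have hT : IsUnit T.det := by
    rw [det_mul, det_conjTranspose]
    exact (isUnit_nonsing_inv_det S hS).mul hS.star
  have hconj : Tᴴ.charpoly = T⁻¹.charpoly := by
    rw [conjTranspose_inv_mul_conjTranspose S hS]
    exact charpoly_units_conj ((isUnit_iff_isUnit_det S).mpr hS).unit _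
  calc T.charpoly.rootMultiplicity lam
      = Tᴴ.charpoly.rootMultiplicity (starRingEnd ℂ lam) := by
        rw [charpoly_conjTranspose, eq_rootMultiplicity_map (starRingEnd ℂ).injective]
    _ = T⁻¹.charpoly.rootMultiplicity (starRingEnd ℂ lam)⁻¹⁻¹ := by rw [hconj, inv_inv]
    _ = T.charpoly.rootMultiplicity (starRingEnd ℂ lam)⁻¹ :=
        rootMultiplicity_inv_charpoly_inv T hT (by simpa using hlam)

open Matrix in
/-- For an invertible `2N×2N` complex matrix `S` and `T = S⁻¹ Sᴴ`, the algebraic multiplicity of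
any nonzero `λ` as a root of the characteristic polynomial of `T` equals that of `1/conj(λ)`. -/
theorem stmt_7 (N : ℕ) (hN : 1 ≤ N) (S : Matrix (Fin (2 * N)) (Fin (2 * N)) ℂ)
    (hS : IsUnit S.det) (lam : ℂ) (hlam : lam ≠ 0) :
    (S⁻¹ * Sᴴ).charpoly.rootMultiplicity lam =
      (S⁻¹ * Sᴴ).charpoly.rootMultiplicity ((starRingEnd ℂ) lam)⁻¹ :=
  stmt_7_general N S hS lam hlam
end

section
/- Let d ≥ 1 and K ≥ 1 with K ≤ d, let ψ_1, …, ψ_K ∈ ℂᵈ be linearly independent vectors, and let E_1, …, E_K ∈ ℂ. Define the K×K matrices α and β by α_{ij} = ⟨ψ_i, ψ_j⟩ (the Gram matrix, with the inner product on ℂᵈ) and β_{ij} = E_i·⟨ψ_i, ψ_j⟩. Then α is invertible, and the matrix M = βᵀ·(αᵀ)⁻¹ has characteristic polynomial ∏_{j=1}^{K}(X − E_j); in particular, the eigenvalues of M counted with algebraic multiplicity are exactly E_1, …, E_K. -/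
namespace Matrix

open scoped ComplexOrder in
theorem isUnit_det_gram_of_linearIndependent {𝕜 E n : Type*} [RCLike 𝕜]
    [NormedAddCommGroup E] [InnerProductSpace 𝕜 E] [Fintype n] [DecidableEq n] {v : n → E}
    (hv : LinearIndependent 𝕜 v) : IsUnit (gram 𝕜 v).det :=
  (isUnit_iff_isUnit_det _).mp (posDef_gram_of_linearIndependent hv).isUnit

open Polynomial in
/-- Since `(D A)ᵀ = Aᵀ D`, the matrix is conjugate to the diagonal matrix `D`. -/
theorem charpoly_transpose_diagonal_mul_mul_inv_transpose {R n : Type*} [CommRing R]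
    [Fintype n] [DecidableEq n] {A : Matrix n n R} (hA : IsUnit A.det) (e : n → R) :
    ((diagonal e * A)ᵀ * Aᵀ⁻¹).charpoly = ∏ i, (X - C (e i)) := by
  rw [charpoly_mul_comm, transpose_mul, diagonal_transpose, ← mul_assoc,
    nonsing_inv_mul _ (by rwa [det_transpose]), one_mul, charpoly_diagonal]

end Matrix

open Matrix Polynomial in
theorem stmt_11_general (d K : ℕ)
    (ψ : Fin K → EuclideanSpace ℂ (Fin d)) (hψ : LinearIndependent ℂ ψ)
    (E : Fin K → ℂ)
    (α β : Matrix (Fin K) (Fin K) ℂ)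
    (hα : ∀ i j, α i j = (inner ℂ (ψ i) (ψ j) : ℂ))
    (hβ : ∀ i j, β i j = E i * (inner ℂ (ψ i) (ψ j) : ℂ)) :
    IsUnit α.det ∧ (βᵀ * (αᵀ)⁻¹).charpoly = ∏ j, (X - C (E j)) := by
  have hα_gram : α = gram ℂ ψ := ext hα
  have hβ_diag : β = diagonal E * α := by
    ext i j
    rw [diagonal_mul, hβ, hα]
  have hα_unit : IsUnit α.det := hα_gram ▸ isUnit_det_gram_of_linearIndependent hψ
  rw [hβ_diag]
  exact ⟨hα_unit, charpoly_transpose_diagonal_mul_mul_inv_transpose hα_unit E⟩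

open Matrix Polynomial in
/-- Correctness of the spectral-data recovery step: for linearly independent
`ψ_1, …, ψ_K ∈ ℂᵈ` and `E_1, …, E_K ∈ ℂ`, the Gram matrix `α` is invertible and
`M = βᵀ (αᵀ)⁻¹` (with `β_{ij} = E_i ⟨ψ_i, ψ_j⟩`) has characteristic polynomial
`∏ⱼ (X − E_j)`. -/
theorem stmt_11 (d K : ℕ) (hd : 1 ≤ d) (hK : 1 ≤ K) (hKd : K ≤ d)
    (ψ : Fin K → EuclideanSpace ℂ (Fin d)) (hψ : LinearIndependent ℂ ψ)
    (E : Fin K → ℂ)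
    (α β : Matrix (Fin K) (Fin K) ℂ)
    (hα : ∀ i j, α i j = (inner ℂ (ψ i) (ψ j) : ℂ))
    (hβ : ∀ i j, β i j = E i * (inner ℂ (ψ i) (ψ j) : ℂ)) :
    IsUnit α.det ∧ (βᵀ * (αᵀ)⁻¹).charpoly = ∏ j, (X - C (E j)) :=
  stmt_11_general d K ψ hψ E α β hα hβ
end
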